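/- Fix N ≥ 1, λ > 0, K > 0, ε > 0, and a label set Y. Let ℓ and R satisfy: for each y, a ↦ ℓ(a, y) is strictly convex, differentiable, with gradient bounded in Euclidean norm by K, and R : ℝ^{D×C} → ℝ is 1-strongly convex and differentiable. For a dataset D of N examples with inputs in the unit Euclidean ball, let θ(D) be the minimizer of J(θ; D) = (1/N) ∑_{n=1}^N ℓ(θᵀx_n, y_n) + λ R(θ). Let ν_β be the probability measure on ℝ^C with Lebesgue density proportional to b ↦ exp(−β‖b‖₂), with β = Nλε/(2K). Then for every query point x̂ with ‖x̂‖₂ ≤ 1, any two datasets D, D′ of N examples differing in one example, and any Borel set S ⊆ ℝ^C, Pr[θ(D)ᵀx̂ + b ∈ S] ≤ e^ε · Pr[θ(D′)ᵀx̂ + b ∈ S] where b ∼ ν_β. (This is the ε-differential privacy of the prediction sensitivity method for a single prediction.) -/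

import Mathlib

/-!
Replacing one example changes the objective by `1/N` times a difference of two losses, which is
`(2K/N)`-Lipschitz in `θ`. Both objectives are `λ`-strongly convex, so each grows quadratically
away from its own minimizer; adding the two growth inequalities gives
`λ ‖θ(D) - θ(D')‖² ≤ (2K/N) ‖θ(D) - θ(D')‖`. As `‖x̂‖ ≤ 1`, the two predictions are then at
distance at most `2K/(Nλ)`, and translating the density `exp(-β‖b‖)` by such a vector changes it
pointwise by a factor at most `exp(β · 2K/(Nλ)) = e^ε`.
-/

open MeasureTheory

/-- The matrix–vector product `θᵀ x ∈ ℝ^C`, where `θ ∈ ℝ^{D×C}` is viewed as an element of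
the Euclidean space indexed by `Fin D × Fin C` (so its Euclidean norm is the Frobenius norm). -/
noncomputable def matVecT {D C : ℕ} (θ : EuclideanSpace ℝ (Fin D × Fin C))
    (x : EuclideanSpace ℝ (Fin D)) : EuclideanSpace ℝ (Fin C) :=
  WithLp.toLp 2 (fun c => ∑ d, θ (d, c) * x d)

open Set
open scoped ENNReal

section Convexity

variable {E : Type*} [NormedAddCommGroup E] [InnerProductSpace ℝ E] {f g : E → ℝ} {m L : ℝ} {a b : E}

lemma convexOn_finset_sum {ι : Type*} {s : Set E} (hs : Convex ℝ s) (t : Finset ι) {f : ι → E → ℝ}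
    (hf : ∀ i ∈ t, ConvexOn ℝ s (f i)) : ConvexOn ℝ s (∑ i ∈ t, f i) :=
  Finset.sum_induction f (ConvexOn ℝ s) (fun _ _ => ConvexOn.add) (convexOn_const 0 hs) hf

theorem StrongConvexOn.add_mul_sq_norm_sub_le_of_isMinOn (hf : StrongConvexOn univ m f)
    (hmin : IsMinOn f univ a) (θ : E) : f a + m / 2 * ‖θ - a‖ ^ 2 ≤ f θ := by
  have hsegment : ∀ t ∈ Ioo (0 : ℝ) 1, f a + m / 2 * (1 - t) * ‖θ - a‖ ^ 2 ≤ f θ := by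
    rintro t ⟨ht0, ht1⟩
    have hconv := hf.2 (mem_univ θ) (mem_univ a) ht0.le (sub_nonneg.2 ht1.le) (by ring)
    have hle : f a ≤ f (t • θ + (1 - t) • a) := hmin (mem_univ _)
    simp only [smul_eq_mul] at hconv
    nlinarith
  have hclosed : IsClosed {t : ℝ | f a + m / 2 * (1 - t) * ‖θ - a‖ ^ 2 ≤ f θ} :=
    isClosed_le (by fun_prop) continuous_const
  have h0 : (0 : ℝ) ∈ closure (Ioo 0 1) := by
    rw [closure_Ioo zero_ne_one]
    exact ⟨le_rfl, zero_le_one⟩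
  simpa using hclosed.closure_subset_iff.2 hsegment h0

theorem StrongConvexOn.mul_norm_sub_le_of_isMinOn (hf : StrongConvexOn univ m f)
    (hg : StrongConvexOn univ m g) (ha : IsMinOn f univ a) (hb : IsMinOn g univ b) (hL : 0 ≤ L)
    (hfg : (f b - g b) - (f a - g a) ≤ L * ‖a - b‖) : m * ‖a - b‖ ≤ L := by
  have hfa := hf.add_mul_sq_norm_sub_le_of_isMinOn ha b
  have hgb := hg.add_mul_sq_norm_sub_le_of_isMinOn hb a
  rw [norm_sub_rev] at hfa
  rcases (norm_nonneg (a - b)).eq_or_lt with hd | hd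
  · simpa [← hd] using hL
  · nlinarith

end Convexity

theorem sub_le_mul_norm_sub_of_norm_gradient_le {F : Type*} [NormedAddCommGroup F]
    [InnerProductSpace ℝ F] [CompleteSpace F] {f : F → ℝ} {K : ℝ} (hf : Differentiable ℝ f)
    (hgrad : ∀ a, ‖gradient f a‖ ≤ K) (a b : F) : f a - f b ≤ K * ‖a - b‖ := by
  have hfderiv : ∀ x ∈ univ, ‖fderiv ℝ f x‖ ≤ K := fun x _ => by
    simpa only [← toDual_gradient, LinearIsometryEquiv.norm_map] using hgrad x
  exact (le_abs_self _).trans <|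
    convex_univ.norm_image_sub_le_of_norm_fderiv_le (fun x _ => hf x) hfderiv trivial trivial

section MatVecT

variable {D C : ℕ}

noncomputable def matVecTₗ (x : EuclideanSpace ℝ (Fin D)) :
    EuclideanSpace ℝ (Fin D × Fin C) →ₗ[ℝ] EuclideanSpace ℝ (Fin C) where
  toFun θ := matVecT θ x
  map_add' θ θ' := by
    ext c
    simp [matVecT, add_mul, Finset.sum_add_distrib]
  map_smul' r θ := by
    ext c
    simp [matVecT, mul_assoc, Finset.mul_sum]

lemma matVecT_sub (θ θ' : EuclideanSpace ℝ (Fin D × Fin C)) (x : EuclideanSpace ℝ (Fin D)) :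
    matVecT (θ - θ') x = matVecT θ x - matVecT θ' x :=
  map_sub (matVecTₗ x) θ θ'

lemma norm_matVecT_le (θ : EuclideanSpace ℝ (Fin D × Fin C)) (x : EuclideanSpace ℝ (Fin D)) :
    ‖matVecT θ x‖ ≤ ‖θ‖ * ‖x‖ := by
  refine (pow_le_pow_iff_left₀ (norm_nonneg _) (by positivity) two_ne_zero).1 ?_
  simp only [mul_pow, EuclideanSpace.norm_sq_eq, Real.norm_eq_abs, sq_abs]
  calc ∑ c, (matVecT θ x c) ^ 2
      ≤ ∑ c : Fin C, (∑ d, θ (d, c) ^ 2) * ∑ d, x d ^ 2 :=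
        Finset.sum_le_sum fun c _ => by
          exact Finset.sum_mul_sq_le_sq_mul_sq Finset.univ (fun d => θ (d, c)) x
    _ = (∑ p : Fin D × Fin C, θ p ^ 2) * ∑ d, x d ^ 2 := by
        rw [← Finset.sum_mul, Fintype.sum_prod_type, Finset.sum_comm]

lemma norm_matVecT_sub_le {x : EuclideanSpace ℝ (Fin D)} (hx : ‖x‖ ≤ 1)
    (θ θ' : EuclideanSpace ℝ (Fin D × Fin C)) : ‖matVecT θ x - matVecT θ' x‖ ≤ ‖θ - θ'‖ := by
  rw [← matVecT_sub]
  exact (norm_matVecT_le _ _).trans (mul_le_of_le_one_right (norm_nonneg _) hx)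

end MatVecT

section EmpiricalRisk

variable {D C N : ℕ} {Y : Type*} {ℓ : EuclideanSpace ℝ (Fin C) → Y → ℝ}

noncomputable def empiricalRisk (ℓ : EuclideanSpace ℝ (Fin C) → Y → ℝ)
    (x : Fin N → EuclideanSpace ℝ (Fin D)) (y : Fin N → Y)
    (θ : EuclideanSpace ℝ (Fin D × Fin C)) : ℝ :=
  (1 / (N : ℝ)) * ∑ n, ℓ (matVecT θ (x n)) (y n)

lemma convexOn_empiricalRisk (hℓ : ∀ y, ConvexOn ℝ univ (fun a => ℓ a y))
    (x : Fin N → EuclideanSpace ℝ (Fin D)) (y : Fin N → Y) :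
    ConvexOn ℝ univ (empiricalRisk ℓ x y) := by
  have hterm : ∀ n ∈ Finset.univ, ConvexOn ℝ univ (fun θ => ℓ (matVecT θ (x n)) (y n)) :=
    fun n _ => (hℓ (y n)).comp_linearMap (matVecTₗ (x n))
  have hsum := (convexOn_finset_sum convex_univ _ hterm).smul (c := 1 / (N : ℝ)) (by positivity)
  simp only [Finset.sum_apply, smul_eq_mul] at hsum
  exact hsum

lemma strongConvexOn_empiricalRisk_add {R : EuclideanSpace ℝ (Fin D × Fin C) → ℝ} {lam : ℝ}
    (hℓ : ∀ y, ConvexOn ℝ univ (fun a => ℓ a y)) (hR : StrongConvexOn univ 1 R) (hlam : 0 ≤ lam)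
    (x : Fin N → EuclideanSpace ℝ (Fin D)) (y : Fin N → Y) :
    StrongConvexOn univ lam (fun θ => empiricalRisk ℓ x y θ + lam * R θ) := by
  rw [strongConvexOn_iff_convex] at hR ⊢
  refine ((convexOn_empiricalRisk hℓ x y).add (hR.smul hlam)).congr fun θ _ => ?_
  simp only [Pi.add_apply, smul_eq_mul]
  ring

lemma empiricalRisk_sub_empiricalRisk {x x' : Fin N → EuclideanSpace ℝ (Fin D)} {y y' : Fin N → Y}
    {n₀ : Fin N} (hagree : ∀ n, n ≠ n₀ → x n = x' n ∧ y n = y' n)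
    (θ : EuclideanSpace ℝ (Fin D × Fin C)) :
    empiricalRisk ℓ x y θ - empiricalRisk ℓ x' y' θ =
      1 / (N : ℝ) * (ℓ (matVecT θ (x n₀)) (y n₀) - ℓ (matVecT θ (x' n₀)) (y' n₀)) := by
  rw [empiricalRisk, empiricalRisk, ← mul_sub, ← Finset.sum_sub_distrib,
    Finset.sum_eq_single_of_mem n₀ (Finset.mem_univ n₀)]
  intro n _ hn
  rw [(hagree n hn).1, (hagree n hn).2, sub_self]

variable {K : ℝ} (hdiff : ∀ y, Differentiable ℝ (fun a => ℓ a y))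
  (hgrad : ∀ y a, ‖gradient (fun a => ℓ a y) a‖ ≤ K)
include hdiff hgrad

lemma loss_matVecT_sub_le {x : EuclideanSpace ℝ (Fin D)} (hx : ‖x‖ ≤ 1) (y : Y)
    (θ θ' : EuclideanSpace ℝ (Fin D × Fin C)) :
    ℓ (matVecT θ x) y - ℓ (matVecT θ' x) y ≤ K * ‖θ - θ'‖ := by
  have hK : 0 ≤ K := (norm_nonneg _).trans (hgrad y 0)
  calc ℓ (matVecT θ x) y - ℓ (matVecT θ' x) y ≤ K * ‖matVecT θ x - matVecT θ' x‖ :=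
        sub_le_mul_norm_sub_of_norm_gradient_le (hdiff y) (hgrad y) _ _
    _ ≤ K * ‖θ - θ'‖ := mul_le_mul_of_nonneg_left (norm_matVecT_sub_le hx θ θ') hK

lemma empiricalRisk_sub_empiricalRisk_le {x x' : Fin N → EuclideanSpace ℝ (Fin D)}
    {y y' : Fin N → Y} (hx : ∀ n, ‖x n‖ ≤ 1) (hx' : ∀ n, ‖x' n‖ ≤ 1)
    {n₀ : Fin N} (hagree : ∀ n, n ≠ n₀ → x n = x' n ∧ y n = y' n)
    (θ θ' : EuclideanSpace ℝ (Fin D × Fin C)) :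
    (empiricalRisk ℓ x y θ' - empiricalRisk ℓ x' y' θ') -
        (empiricalRisk ℓ x y θ - empiricalRisk ℓ x' y' θ) ≤ 2 * K / N * ‖θ - θ'‖ := by
  rw [empiricalRisk_sub_empiricalRisk hagree, empiricalRisk_sub_empiricalRisk hagree]
  have h := loss_matVecT_sub_le hdiff hgrad (hx n₀) (y n₀) θ' θ
  have h' := loss_matVecT_sub_le hdiff hgrad (hx' n₀) (y' n₀) θ θ'
  rw [norm_sub_rev] at h
  have hN : 0 ≤ 1 / (N : ℝ) := by positivity
  calc _ = 1 / (N : ℝ) * ((ℓ (matVecT θ' (x n₀)) (y n₀) - ℓ (matVecT θ (x n₀)) (y n₀)) +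
          (ℓ (matVecT θ (x' n₀)) (y' n₀) - ℓ (matVecT θ' (x' n₀)) (y' n₀))) := by ring
    _ ≤ 1 / (N : ℝ) * (K * ‖θ - θ'‖ + K * ‖θ - θ'‖) := by gcongr
    _ = 2 * K / N * ‖θ - θ'‖ := by ring

end EmpiricalRisk

section Laplace

variable {E : Type*} [NormedAddCommGroup E] [MeasurableSpace E] [MeasurableAdd E] (μ : Measure E)
  [μ.IsAddLeftInvariant]

lemma withDensity_preimage_const_add (f : E → ℝ≥0∞) {S : Set E} (hS : MeasurableSet S) (v : E) :
    μ.withDensity f ((v + ·) ⁻¹' S) = ∫⁻ b in S, f (b - v) ∂μ := by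
  rw [withDensity_apply _ (hS.preimage (measurable_const_add v))]
  simpa using (measurePreserving_add_left μ v).setLIntegral_comp_preimage_emb
    (measurableEmbedding_addLeft v) (fun b => f (b - v)) S

lemma withDensity_preimage_const_add_le {f : E → ℝ≥0∞} {c : ℝ≥0∞} (hc : c ≠ ∞) {S : Set E}
    (hS : MeasurableSet S) {v w : E} (hf : ∀ b, f (b - v) ≤ c * f (b - w)) :
    μ.withDensity f ((v + ·) ⁻¹' S) ≤ c * μ.withDensity f ((w + ·) ⁻¹' S) := by
  rw [withDensity_preimage_const_add μ f hS, withDensity_preimage_const_add μ f hS,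
    ← lintegral_const_mul' c _ hc]
  exact lintegral_mono fun b => hf b

end Laplace

lemma exp_neg_mul_norm_sub_le {F : Type*} [SeminormedAddCommGroup F] {β ε : ℝ} (hβ : 0 ≤ β)
    {v w : F} (hvw : β * ‖v - w‖ ≤ ε) (b : F) :
    Real.exp (-β * ‖b - v‖) ≤ Real.exp ε * Real.exp (-β * ‖b - w‖) := by
  rw [← Real.exp_add, Real.exp_le_exp]
  have htri := norm_sub_le_norm_sub_add_norm_sub b v w
  nlinarith

theorem prediction_sensitivity_private_general {D C : ℕ} {Y : Type*} (N : ℕ)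
    (lam K ε : ℝ) (hlam : 0 < lam) (hK : 0 < K) (hε : 0 < ε)
    (ℓ : EuclideanSpace ℝ (Fin C) → Y → ℝ)
    (hconv : ∀ y, StrictConvexOn ℝ Set.univ (fun a => ℓ a y))
    (hdiff : ∀ y, Differentiable ℝ (fun a => ℓ a y))
    (hgrad : ∀ y a, ‖gradient (fun a => ℓ a y) a‖ ≤ K)
    (R : EuclideanSpace ℝ (Fin D × Fin C) → ℝ)
    (hRconv : ConvexOn ℝ Set.univ (fun θ => R θ - 1 / 2 * ‖θ‖ ^ 2))
    (x x' : Fin N → EuclideanSpace ℝ (Fin D)) (y y' : Fin N → Y)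
    (hx : ∀ n, ‖x n‖ ≤ 1) (hx' : ∀ n, ‖x' n‖ ≤ 1)
    (hdiffer : ∃ n₀, ∀ n, n ≠ n₀ → x n = x' n ∧ y n = y' n)
    (J J' : EuclideanSpace ℝ (Fin D × Fin C) → ℝ)
    (hJ : ∀ θ, J θ = (1 / (N : ℝ)) * ∑ n, ℓ (matVecT θ (x n)) (y n) + lam * R θ)
    (hJ' : ∀ θ, J' θ = (1 / (N : ℝ)) * ∑ n, ℓ (matVecT θ (x' n)) (y' n) + lam * R θ)
    (θ₁ θ₂ : EuclideanSpace ℝ (Fin D × Fin C))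
    (hθ₁ : ∀ θ, J θ₁ ≤ J θ) (hθ₂ : ∀ θ, J' θ₂ ≤ J' θ)
    (xhat : EuclideanSpace ℝ (Fin D)) (hxhat : ‖xhat‖ ≤ 1)
    (β : ℝ) (hβ : β = N * lam * ε / (2 * K))
    (ν : Measure (EuclideanSpace ℝ (Fin C)))
    (hν : ν = volume.withDensity (fun b => ENNReal.ofReal
      (Real.exp (-β * ‖b‖) / ∫ b' : EuclideanSpace ℝ (Fin C), Real.exp (-β * ‖b'‖))))
    (S : Set (EuclideanSpace ℝ (Fin C))) (hS : MeasurableSet S) :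
    ν ((fun b => matVecT θ₁ xhat + b) ⁻¹' S) ≤
      ENNReal.ofReal (Real.exp ε) * ν ((fun b => matVecT θ₂ xhat + b) ⁻¹' S) := by
  obtain ⟨n₀, hagree⟩ := hdiffer
  obtain rfl : J = fun θ => empiricalRisk ℓ x y θ + lam * R θ := funext hJ
  obtain rfl : J' = fun θ => empiricalRisk ℓ x' y' θ + lam * R θ := funext hJ'
  have hN : (0 : ℝ) < N := by exact_mod_cast n₀.pos
  have hR : StrongConvexOn univ 1 R := strongConvexOn_iff_convex.2 hRconv
  have hℓ y := (hconv y).convexOn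
  have hsens : lam * ‖θ₁ - θ₂‖ ≤ 2 * K / N :=
    StrongConvexOn.mul_norm_sub_le_of_isMinOn
      (strongConvexOn_empiricalRisk_add hℓ hR hlam.le x y)
      (strongConvexOn_empiricalRisk_add hℓ hR hlam.le x' y')
      (fun θ _ => hθ₁ θ) (fun θ _ => hθ₂ θ) (by positivity) (by
        linarith [empiricalRisk_sub_empiricalRisk_le hdiff hgrad hx hx' hagree θ₁ θ₂])
  have hβ0 : 0 ≤ β := by rw [hβ]; positivity
  have hpred : β * ‖matVecT θ₁ xhat - matVecT θ₂ xhat‖ ≤ ε := calc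
    _ ≤ β * (2 * K / (N * lam)) := by
      refine mul_le_mul_of_nonneg_left ((norm_matVecT_sub_le hxhat θ₁ θ₂).trans ?_) hβ0
      rw [le_div_iff₀ (by positivity)]
      linarith [(le_div_iff₀ hN).1 hsens]
    _ = ε := by rw [hβ]; field_simp
  have hZ : 0 ≤ ∫ b : EuclideanSpace ℝ (Fin C), Real.exp (-β * ‖b‖) :=
    integral_nonneg fun _ => (Real.exp_pos _).le
  subst hν
  refine withDensity_preimage_const_add_le volume ENNReal.ofReal_ne_top hS fun b => ?_
  rw [← ENNReal.ofReal_mul (Real.exp_pos ε).le, mul_div_assoc']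
  exact ENNReal.ofReal_le_ofReal
    (div_le_div_of_nonneg_right (exp_neg_mul_norm_sub_le hβ0 hpred b) hZ)

/-- Theorem 5 of the paper, single prediction: the prediction sensitivity method,
which releases `θ(𝒟)ᵀx̂ + b` with `b` drawn from the density proportional to `exp(-β‖b‖₂)` and
`β = Nλε/(2K)`, is `ε`-differentially private for a single query `x̂` with `‖x̂‖₂ ≤ 1`. -/
theorem prediction_sensitivity_private {D C : ℕ} {Y : Type*} (N : ℕ) (hN : 1 ≤ N)
    (lam K ε : ℝ) (hlam : 0 < lam) (hK : 0 < K) (hε : 0 < ε)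
    (ℓ : EuclideanSpace ℝ (Fin C) → Y → ℝ)
    (hconv : ∀ y, StrictConvexOn ℝ Set.univ (fun a => ℓ a y))
    (hdiff : ∀ y, Differentiable ℝ (fun a => ℓ a y))
    (hgrad : ∀ y a, ‖gradient (fun a => ℓ a y) a‖ ≤ K)
    (R : EuclideanSpace ℝ (Fin D × Fin C) → ℝ)
    (hRconv : ConvexOn ℝ Set.univ (fun θ => R θ - 1 / 2 * ‖θ‖ ^ 2))
    (hRdiff : Differentiable ℝ R)
    (x x' : Fin N → EuclideanSpace ℝ (Fin D)) (y y' : Fin N → Y)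
    (hx : ∀ n, ‖x n‖ ≤ 1) (hx' : ∀ n, ‖x' n‖ ≤ 1)
    (hdiffer : ∃ n₀, ∀ n, n ≠ n₀ → x n = x' n ∧ y n = y' n)
    (J J' : EuclideanSpace ℝ (Fin D × Fin C) → ℝ)
    (hJ : ∀ θ, J θ = (1 / (N : ℝ)) * ∑ n, ℓ (matVecT θ (x n)) (y n) + lam * R θ)
    (hJ' : ∀ θ, J' θ = (1 / (N : ℝ)) * ∑ n, ℓ (matVecT θ (x' n)) (y' n) + lam * R θ)
    (θ₁ θ₂ : EuclideanSpace ℝ (Fin D × Fin C))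
    (hθ₁ : ∀ θ, J θ₁ ≤ J θ) (hθ₂ : ∀ θ, J' θ₂ ≤ J' θ)
    (xhat : EuclideanSpace ℝ (Fin D)) (hxhat : ‖xhat‖ ≤ 1)
    (β : ℝ) (hβ : β = N * lam * ε / (2 * K))
    (ν : Measure (EuclideanSpace ℝ (Fin C)))
    (hν : ν = volume.withDensity (fun b => ENNReal.ofReal
      (Real.exp (-β * ‖b‖) / ∫ b' : EuclideanSpace ℝ (Fin C), Real.exp (-β * ‖b'‖))))
    (S : Set (EuclideanSpace ℝ (Fin C))) (hS : MeasurableSet S) :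
    ν ((fun b => matVecT θ₁ xhat + b) ⁻¹' S) ≤
      ENNReal.ofReal (Real.exp ε) * ν ((fun b => matVecT θ₂ xhat + b) ⁻¹' S) :=
  prediction_sensitivity_private_general N lam K ε hlam hK hε ℓ hconv hdiff hgrad R hRconv x x' y y'
    hx hx' hdiffer J J' hJ hJ' θ₁ θ₂ hθ₁ hθ₂ xhat hxhat β hβ ν hν S hS
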